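/- Let A be a C-nondisturbing operator on H⊗K with probe operators B_1,…,B_n. Then A is an effect with tr_H(A) = I_K if and only if every B_i is an effect (0 ≤ B_i ≤ I_K) and ∑_{i=1}^n B_i = I_K (i.e., {B_i} is an observable on K). -/

import Mathlib

open scoped ComplexOrder Kronecker

noncomputable section

/-- Tensor product of vectors in the concrete model `EuclideanSpace ℂ (Fin n × Fin m)` of `H ⊗ K`. -/
def tens {n m : ℕ} (x : EuclideanSpace ℂ (Fin n)) (y : EuclideanSpace ℂ (Fin m)) :
    EuclideanSpace ℂ (Fin n × Fin m) :=
  (WithLp.equiv 2 _).symm fun p => x p.1 * y p.2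

/-- The rank-one operator `|x⟩⟨y|`. -/
def ketBra {ι : Type*} [Fintype ι] (x y : EuclideanSpace ℂ ι) :
    EuclideanSpace ℂ ι →ₗ[ℂ] EuclideanSpace ℂ ι where
  toFun z := (inner ℂ y z : ℂ) • x
  map_add' a b := by simp [inner_add_right, add_smul]
  map_smul' c a := by simp [inner_smul_right, smul_smul]

/-- The tensor product of operators. -/
def opTens {n m : ℕ}
    (S : EuclideanSpace ℂ (Fin n) →ₗ[ℂ] EuclideanSpace ℂ (Fin n))
    (T : EuclideanSpace ℂ (Fin m) →ₗ[ℂ] EuclideanSpace ℂ (Fin m)) :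
    EuclideanSpace ℂ (Fin n × Fin m) →ₗ[ℂ] EuclideanSpace ℂ (Fin n × Fin m) :=
  Matrix.toEuclideanLin
    ((Matrix.toEuclideanLin.symm S) ⊗ₖ (Matrix.toEuclideanLin.symm T))

/-- `A` is C-nondisturbing for the context `C = {P_{ψ i}}`. -/
def Nondisturbing {n m : ℕ} (ψ : OrthonormalBasis (Fin n) ℂ (EuclideanSpace ℂ (Fin n)))
    (A : EuclideanSpace ℂ (Fin n × Fin m) →ₗ[ℂ] EuclideanSpace ℂ (Fin n × Fin m)) : Prop :=
  ∀ i, A ∘ₗ opTens (ketBra (ψ i) (ψ i)) LinearMap.id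
      = opTens (ketBra (ψ i) (ψ i)) LinearMap.id ∘ₗ A

/-- `B i` are probe operators for `A`: `A (ψ i ⊗ φ) = ψ i ⊗ B i φ`. -/
def ProbeOps {n m : ℕ} (ψ : OrthonormalBasis (Fin n) ℂ (EuclideanSpace ℂ (Fin n)))
    (A : EuclideanSpace ℂ (Fin n × Fin m) →ₗ[ℂ] EuclideanSpace ℂ (Fin n × Fin m))
    (B : Fin n → EuclideanSpace ℂ (Fin m) →ₗ[ℂ] EuclideanSpace ℂ (Fin m)) : Prop :=
  ∀ i φv, A (tens (ψ i) φv) = tens (ψ i) (B i φv)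

/-- Loewner order: `S ≤ T` iff `⟪φ, (T - S) φ⟫` is real and nonnegative for every `φ`. -/
def opLE {ι : Type*} [Fintype ι]
    (S T : EuclideanSpace ℂ ι →ₗ[ℂ] EuclideanSpace ℂ ι) : Prop :=
  ∀ φv, 0 ≤ (inner ℂ φv ((T - S) φv) : ℂ)

/-- The partial trace over `H`. -/
def trH {n m : ℕ} (ψ : OrthonormalBasis (Fin n) ℂ (EuclideanSpace ℂ (Fin n)))
    (φ : OrthonormalBasis (Fin m) ℂ (EuclideanSpace ℂ (Fin m)))
    (T : EuclideanSpace ℂ (Fin n × Fin m) →ₗ[ℂ] EuclideanSpace ℂ (Fin n × Fin m)) :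
    EuclideanSpace ℂ (Fin m) →ₗ[ℂ] EuclideanSpace ℂ (Fin m) :=
  ∑ j, ∑ k, (∑ i, (inner ℂ (tens (ψ i) (φ j)) (T (tens (ψ i) (φ k))) : ℂ)) • ketBra (φ j) (φ k)

/-- The partial trace over `K`. -/
def trK {n m : ℕ} (ψ : OrthonormalBasis (Fin n) ℂ (EuclideanSpace ℂ (Fin n)))
    (φ : OrthonormalBasis (Fin m) ℂ (EuclideanSpace ℂ (Fin m)))
    (T : EuclideanSpace ℂ (Fin n × Fin m) →ₗ[ℂ] EuclideanSpace ℂ (Fin n × Fin m)) :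
    EuclideanSpace ℂ (Fin n) →ₗ[ℂ] EuclideanSpace ℂ (Fin n) :=
  ∑ i, ∑ k, (∑ j, (inner ℂ (tens (ψ i) (φ j)) (T (tens (ψ k) (φ j))) : ℂ)) • ketBra (ψ i) (ψ k)


lemma es_sum_apply {ι κ : Type} [Fintype κ] (f : κ → EuclideanSpace ℂ ι) (p : ι) :
    (∑ k, f k) p = ∑ k, f k p := by
  rw [WithLp.ofLp_sum, Finset.sum_apply]

lemma tens_apply {n m : ℕ} (x : EuclideanSpace ℂ (Fin n)) (y : EuclideanSpace ℂ (Fin m)) (p : Fin n × Fin m) :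
    tens x y p = x p.1 * y p.2 := rfl

lemma inner_tens {n m : ℕ} (a c : EuclideanSpace ℂ (Fin n)) (b d : EuclideanSpace ℂ (Fin m)) :
    (inner ℂ (tens a b) (tens c d) : ℂ) = (inner ℂ a c : ℂ) * (inner ℂ b d : ℂ) := by
  simp only [PiLp.inner_apply, RCLike.inner_apply, tens_apply]
  rw [Fintype.sum_prod_type, Finset.sum_mul_sum]
  exact Finset.sum_congr rfl fun k _ => Finset.sum_congr rfl fun j _ => by
    simp [map_mul]; ring

lemma tens_sub {n m : ℕ} (x : EuclideanSpace ℂ (Fin n)) (a b : EuclideanSpace ℂ (Fin m)) :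
    tens x (a - b) = tens x a - tens x b := by
  ext p
  show x p.1 * (a p.2 - b p.2) = x p.1 * a p.2 - x p.1 * b p.2
  ring

def comp {n m : ℕ} (ψ : OrthonormalBasis (Fin n) ℂ (EuclideanSpace ℂ (Fin n))) (i : Fin n)
    (z : EuclideanSpace ℂ (Fin n × Fin m)) : EuclideanSpace ℂ (Fin m) :=
  (WithLp.equiv 2 _).symm fun j => ∑ k, (starRingEnd ℂ) (ψ i k) * z (k, j)

lemma psi_delta {n : ℕ} (ψ : OrthonormalBasis (Fin n) ℂ (EuclideanSpace ℂ (Fin n))) (k p : Fin n) :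
    ∑ i, (starRingEnd ℂ) (ψ i k) * ψ i p = if k = p then 1 else 0 := by
  have h := ψ.sum_repr' (EuclideanSpace.single k (1:ℂ))
  have h2 : (∑ i, (inner ℂ (ψ i) (EuclideanSpace.single k (1:ℂ)) : ℂ) • ψ i) p
      = EuclideanSpace.single k (1:ℂ) p := by rw [h]
  rw [es_sum_apply] at h2
  simp only [PiLp.smul_apply, smul_eq_mul,
    EuclideanSpace.inner_single_right, one_mul, EuclideanSpace.single_apply] at h2
  rw [h2]
  rcases eq_or_ne k p with rfl | hkp
  · simp
  · simp [hkp, Ne.symm hkp]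

lemma decomp {n m : ℕ} (ψ : OrthonormalBasis (Fin n) ℂ (EuclideanSpace ℂ (Fin n)))
    (z : EuclideanSpace ℂ (Fin n × Fin m)) :
    ∑ i, tens (ψ i) (comp ψ i z) = z := by
  ext p
  rw [es_sum_apply]
  simp only [tens_apply, comp]
  show ∑ i, ψ i p.1 * ∑ k, (starRingEnd ℂ) (ψ i k) * z (k, p.2) = z p
  calc ∑ i, ψ i p.1 * ∑ k, (starRingEnd ℂ) (ψ i k) * z (k, p.2)
      = ∑ k, (∑ i, (starRingEnd ℂ) (ψ i k) * ψ i p.1) * z (k, p.2) := by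
        simp_rw [Finset.mul_sum]
        rw [Finset.sum_comm]
        simp_rw [Finset.sum_mul]
        exact Finset.sum_congr rfl fun k _ => Finset.sum_congr rfl fun i _ => by ring
    _ = z p := by
        simp_rw [psi_delta]
        simp

lemma ketBra_apply {ι : Type*} [Fintype ι] (x y z : EuclideanSpace ℂ ι) :
    ketBra x y z = (inner ℂ y z : ℂ) • x := rfl

lemma quad {n m : ℕ} (ψ : OrthonormalBasis (Fin n) ℂ (EuclideanSpace ℂ (Fin n)))
    (T : EuclideanSpace ℂ (Fin n × Fin m) →ₗ[ℂ] EuclideanSpace ℂ (Fin n × Fin m))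
    (C : Fin n → EuclideanSpace ℂ (Fin m) →ₗ[ℂ] EuclideanSpace ℂ (Fin m))
    (hTC : ∀ i φv, T (tens (ψ i) φv) = tens (ψ i) (C i φv))
    (z : EuclideanSpace ℂ (Fin n × Fin m)) :
    (inner ℂ z (T z) : ℂ) = ∑ i, (inner ℂ (comp ψ i z) (C i (comp ψ i z)) : ℂ) := by
  have hON := orthonormal_iff_ite.mp ψ.orthonormal
  conv_lhs => rw [← decomp ψ z]
  rw [map_sum]
  simp_rw [hTC]
  rw [sum_inner]
  simp_rw [inner_sum, inner_tens, hON]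
  simp

lemma recon {m : ℕ} (φb : OrthonormalBasis (Fin m) ℂ (EuclideanSpace ℂ (Fin m)))
    (T : EuclideanSpace ℂ (Fin m) →ₗ[ℂ] EuclideanSpace ℂ (Fin m)) :
    ∑ j, ∑ k, (inner ℂ (φb j) (T (φb k)) : ℂ) • ketBra (φb j) (φb k) = T := by
  apply LinearMap.ext; intro v
  rw [LinearMap.sum_apply]
  simp_rw [LinearMap.sum_apply, LinearMap.smul_apply, ketBra_apply]
  rw [Finset.sum_comm]
  have h1 : ∀ k, ∑ j, (inner ℂ (φb j) (T (φb k)) : ℂ) • ((inner ℂ (φb k) v : ℂ) • φb j)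
      = (inner ℂ (φb k) v : ℂ) • T (φb k) := by
    intro k
    rw [Finset.sum_congr rfl (fun j _ => smul_comm (inner ℂ (φb j) (T (φb k)) : ℂ) (inner ℂ (φb k) v : ℂ) (φb j)),
      ← Finset.smul_sum, φb.sum_repr']
  rw [Finset.sum_congr rfl (fun k _ => h1 k)]
  calc ∑ k, (inner ℂ (φb k) v : ℂ) • T (φb k)
      = T (∑ k, (inner ℂ (φb k) v : ℂ) • φb k) := by rw [map_sum]; simp_rw [map_smul]
    _ = T v := by rw [φb.sum_repr']

lemma trH_sum {n m : ℕ} (ψ : OrthonormalBasis (Fin n) ℂ (EuclideanSpace ℂ (Fin n)))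
    (φb : OrthonormalBasis (Fin m) ℂ (EuclideanSpace ℂ (Fin m)))
    (A : EuclideanSpace ℂ (Fin n × Fin m) →ₗ[ℂ] EuclideanSpace ℂ (Fin n × Fin m))
    (B : Fin n → EuclideanSpace ℂ (Fin m) →ₗ[ℂ] EuclideanSpace ℂ (Fin m))
    (hB : ∀ i φv, A (tens (ψ i) φv) = tens (ψ i) (B i φv)) :
    trH ψ φb A = ∑ i, B i := by
  have hON := orthonormal_iff_ite.mp ψ.orthonormal
  have h : ∀ j k, (∑ i, (inner ℂ (tens (ψ i) (φb j)) (A (tens (ψ i) (φb k))) : ℂ))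
      = (inner ℂ (φb j) ((∑ i, B i) (φb k)) : ℂ) := by
    intro j k
    simp_rw [hB, inner_tens, hON]
    rw [LinearMap.sum_apply, inner_sum]
    simp
  unfold trH
  simp_rw [h]
  exact recon φb (∑ i, B i)

theorem stmt12 {n m : ℕ} (ψ : OrthonormalBasis (Fin n) ℂ (EuclideanSpace ℂ (Fin n))) (φb : OrthonormalBasis (Fin m) ℂ (EuclideanSpace ℂ (Fin m))) (A : EuclideanSpace ℂ (Fin n × Fin m) →ₗ[ℂ] EuclideanSpace ℂ (Fin n × Fin m))
    (B : Fin n → (EuclideanSpace ℂ (Fin m) →ₗ[ℂ] EuclideanSpace ℂ (Fin m)))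
    (hA : Nondisturbing ψ A) (hB : ProbeOps ψ A B) :
    (opLE 0 A ∧ opLE A LinearMap.id ∧ trH ψ φb A = LinearMap.id) ↔
      ((∀ i, opLE 0 (B i) ∧ opLE (B i) LinearMap.id) ∧ (∑ i, B i) = LinearMap.id) := by
  have hON := orthonormal_iff_ite.mp ψ.orthonormal
  have hsub : ∀ i φv, ((LinearMap.id - A :
        EuclideanSpace ℂ (Fin n × Fin m) →ₗ[ℂ] EuclideanSpace ℂ (Fin n × Fin m))) (tens (ψ i) φv)
      = tens (ψ i) ((LinearMap.id - B i :
        EuclideanSpace ℂ (Fin m) →ₗ[ℂ] EuclideanSpace ℂ (Fin m)) φv) := by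
    intro i φv
    simp only [LinearMap.sub_apply, LinearMap.id_apply, hB i φv, tens_sub]
  have htr : trH ψ φb A = ∑ i, B i := trH_sum ψ φb A B hB
  constructor
  · rintro ⟨h0, h1, htrh⟩
    refine ⟨fun i => ⟨?_, ?_⟩, ?_⟩
    · intro φv
      have h := h0 (tens (ψ i) φv)
      simp only [sub_zero, hB i φv, inner_tens, hON, eq_self_iff_true, if_true, one_mul] at h
      simpa only [sub_zero] using h
    · intro φv
      have h := h1 (tens (ψ i) φv)
      simp only [hsub i φv, inner_tens, hON, eq_self_iff_true, if_true, one_mul] at h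
      exact h
    · rw [htr] at htrh; exact htrh
  · rintro ⟨hBi, hsum⟩
    refine ⟨?_, ?_, ?_⟩
    · intro z
      rw [sub_zero, quad ψ A B hB z]
      refine Finset.sum_nonneg fun i _ => ?_
      have h := (hBi i).1 (comp ψ i z)
      simpa only [sub_zero] using h
    · intro z
      rw [quad ψ (LinearMap.id - A) (fun i => LinearMap.id - B i) hsub z]
      exact Finset.sum_nonneg fun i _ => (hBi i).2 (comp ψ i z)
    · rw [htr, hsum]

end
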